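/- Let α_i, β_i ∈ ℝ³ be linearly independent, let R : ℝ → 3×3 real matrices take values in the special orthogonal group, and let α̂, β̂ : ℝ → ℝ³ satisfy α̂(t) − R(t)ᵀ α_i → 0 and β̂(t) − R(t)ᵀ β_i → 0 as t → ∞. Define R̃(t)ᵀ as the matrix with columns (α̂(t)/‖α_i‖, (α̂(t) × β̂(t))/‖α_i × β_i‖, (α̂(t) × (α̂(t) × β̂(t)))/‖α_i × (α_i × β_i)‖) multiplied on the right by R_iᵀ. Then R̃(t)ᵀ − R(t)ᵀ → 0 as t → ∞ (in any matrix norm). -/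

import Mathlib

/-
For a rotation `Q` the cross product is equivariant, `Q (x × y) = Q x × Q y`, so feeding the exact
body-frame vectors `Qαᵢ, Qβᵢ` into the reconstruction formula gives `Q Rᵢ Rᵢᵀ = Q`, because `Rᵢ` has
orthonormal columns. The reconstruction is a continuous function of the measured pair, and the
exact pairs `(Qαᵢ, Qβᵢ)` all lie on the compact set `‖a‖ = ‖αᵢ‖, ‖b‖ = ‖βᵢ‖`. Near a compact set
a continuous map is uniformly continuous, so measurement errors tending to zero force the
reconstruction error to zero.
-/

open scoped RealInnerProductSpace
open Matrix Filter

noncomputable section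

/-- ℝ³ with the Euclidean norm and inner product. -/
abbrev V3 : Type := EuclideanSpace ℝ (Fin 3)

/-- Identity identification of `V3` with plain functions `Fin 3 → ℝ`. -/
def toF (v : V3) : Fin 3 → ℝ := v

/-- Identity identification of plain functions `Fin 3 → ℝ` with `V3`. -/
def toE (v : Fin 3 → ℝ) : V3 := WithLp.toLp 2 v

/-- The cross product on ℝ³. -/
def cross (v w : V3) : V3 := toE (crossProduct (toF v) (toF w))

/-- The skew-symmetric matrix `v_×` with `v_× x = v × x`. -/
def skew (v : V3) : Matrix (Fin 3) (Fin 3) ℝ :=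
  !![0, -(toF v 2), toF v 1; toF v 2, 0, -(toF v 0); -(toF v 1), toF v 0, 0]

/-- Matrix-vector multiplication on `V3`. -/
def mulVecE (M : Matrix (Fin 3) (Fin 3) ℝ) (x : V3) : V3 := toE (M.mulVec (toF x))

/-- The 3×3 matrix whose columns are `v1, v2, v3`. -/
def colMat (v1 v2 v3 : V3) : Matrix (Fin 3) (Fin 3) ℝ :=
  Matrix.of fun i j => toF (![v1, v2, v3] j) i

/-- The matrix `R_i` with columns
`αi/‖αi‖, (αi × βi)/‖αi × βi‖, (αi × (αi × βi))/‖αi × (αi × βi)‖`. -/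
def Rimat (αi βi : V3) : Matrix (Fin 3) (Fin 3) ℝ :=
  colMat ((1 / ‖αi‖) • αi) ((1 / ‖cross αi βi‖) • cross αi βi)
    ((1 / ‖cross αi (cross αi βi)‖) • cross αi (cross αi βi))

theorem Continuous.tendsto_sub_comp_of_isCompact {ι E F : Type*}
    [UniformSpace E] [AddGroup E] [IsUniformAddGroup E]
    [UniformSpace F] [AddGroup F] [IsUniformAddGroup F]
    {f : E → F} (hf : Continuous f) {K : Set E} (hK : IsCompact K) {l : Filter ι}
    {u v : ι → E} (hv : ∀ᶠ t in l, v t ∈ K) (huv : Tendsto (fun t => u t - v t) l (nhds 0)) :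
    Tendsto (fun t => f (u t) - f (v t)) l (nhds 0) := by
  have hvu : Tendsto (fun t => (v t, u t)) l (uniformity E) := by
    rw [uniformity_eq_comap_nhds_zero]
    exact tendsto_comap_iff.2 huv
  have hf_vu : Tendsto (fun t => (f (v t), f (u t))) l (uniformity F) := fun r hr => by
    -- Heine–Cantor at `K`: `f y` is close to `f x` once `x ∈ K` and `y` is close to `x`,
    -- even if `y ∉ K`.
    have hnear := hvu (hK.uniformContinuousAt_of_continuousAt f (fun a _ => hf.continuousAt) hr)
    exact (Filter.Eventually.and hnear hv).mono fun _ h => h.1 h.2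
  rw [uniformity_eq_comap_nhds_zero] at hf_vu
  exact tendsto_comap_iff.1 hf_vu

lemma toF_cross (u v : V3) : toF (cross u v) = crossProduct (toF u) (toF v) := rfl

lemma inner_eq_dotProduct (x y : V3) : ⟪x, y⟫ = toF x ⬝ᵥ toF y := by
  simp [EuclideanSpace.inner_eq_star_dotProduct, toF, dotProduct_comm]

lemma norm_sq_eq_dotProduct (x : V3) : ‖x‖ ^ 2 = toF x ⬝ᵥ toF x := by
  rw [← real_inner_self_eq_norm_sq, inner_eq_dotProduct]

lemma inner_self_cross (u v : V3) : ⟪u, cross u v⟫ = 0 := by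
  rw [inner_eq_dotProduct, toF_cross, dot_self_cross]

lemma inner_cross_self (u v : V3) : ⟪v, cross u v⟫ = 0 := by
  rw [inner_eq_dotProduct, toF_cross, dot_cross_self]

lemma norm_cross_sq (u v : V3) : ‖cross u v‖ ^ 2 = ‖u‖ ^ 2 * ‖v‖ ^ 2 - ⟪u, v⟫ ^ 2 := by
  simp only [norm_sq_eq_dotProduct, inner_eq_dotProduct, toF_cross, cross_dot_cross,
    dotProduct_comm (toF v) (toF u)]
  ring

lemma cross_ne_zero_of_inner_eq_zero {u v : V3} (hu : u ≠ 0) (hv : v ≠ 0) (huv : ⟪u, v⟫ = 0) :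
    cross u v ≠ 0 := by
  intro h0
  have h := norm_cross_sq u v
  rw [h0, huv, norm_zero] at h
  have : ‖u‖ ^ 2 * ‖v‖ ^ 2 ≠ 0 :=
    mul_ne_zero (pow_ne_zero 2 (norm_ne_zero_iff.2 hu)) (pow_ne_zero 2 (norm_ne_zero_iff.2 hv))
  exact this (by linarith)

lemma cross_ne_zero_of_linearIndependent {u v : V3} (h : LinearIndependent ℝ ![u, v]) :
    cross u v ≠ 0 := by
  have hF : LinearIndependent ℝ ![toF u, toF v] := by
    rw [show ![toF u, toF v] = WithLp.linearEquiv 2 ℝ (Fin 3 → ℝ) ∘ ![u, v] by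
      ext i : 1; fin_cases i <;> rfl]
    exact h.map' _ (LinearEquiv.ker _)
  exact fun h0 => crossProduct_ne_zero_iff_linearIndependent.2 hF (congrArg toF h0)

@[fun_prop]
lemma Continuous.cross {X : Type*} [TopologicalSpace X] {f g : X → V3}
    (hf : Continuous f) (hg : Continuous g) : Continuous fun x => _root_.cross (f x) (g x) := by
  refine (PiLp.continuous_toLp 2 _).comp (continuous_pi fun i => ?_)
  fin_cases i <;>
    simp only [toF, cross_apply, Fin.zero_eta, Fin.mk_one, Fin.reduceFinMk, Fin.isValue,
      cons_val_zero, cons_val_one, cons_val] <;>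
    fun_prop

@[fun_prop]
lemma Continuous.colMat {X : Type*} [TopologicalSpace X] {f g h : X → V3}
    (hf : Continuous f) (hg : Continuous g) (hh : Continuous h) :
    Continuous fun x => _root_.colMat (f x) (g x) (h x) := by
  refine continuous_matrix fun i j => ?_
  fin_cases j <;>
    simp only [_root_.colMat, toF, of_apply, Fin.zero_eta, Fin.mk_one, Fin.reduceFinMk,
      Fin.isValue, cons_val_zero, cons_val_one, cons_val] <;>
    fun_prop

lemma transpose_mulVec_cross_mulVec {R : Type*} [CommRing R] (M : Matrix (Fin 3) (Fin 3) R)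
    (x y : Fin 3 → R) : Mᵀ *ᵥ ((M *ᵥ x) ⨯₃ (M *ᵥ y)) = M.det • (x ⨯₃ y) := by
  ext i
  fin_cases i <;>
    simp only [mulVec, dotProduct, transpose_apply, cross_apply, Fin.sum_univ_three,
      det_fin_three, Pi.smul_apply, smul_eq_mul, Fin.zero_eta, Fin.mk_one, Fin.reduceFinMk,
      Fin.isValue, cons_val_zero, cons_val_one, cons_val] <;>
    ring

lemma mulVecE_cross {Q : Matrix (Fin 3) (Fin 3) ℝ} (hQ : Q * Qᵀ = 1) (hdet : Q.det = 1)
    (x y : V3) : mulVecE Q (cross x y) = cross (mulVecE Q x) (mulVecE Q y) := by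
  have h := congrArg (Q *ᵥ ·) (transpose_mulVec_cross_mulVec Q (toF x) (toF y))
  simp only [mulVec_mulVec, hQ, one_mulVec, hdet, one_smul] at h
  exact congrArg toE h.symm

lemma norm_mulVecE {Q : Matrix (Fin 3) (Fin 3) ℝ} (hQ : Q * Qᵀ = 1) (x : V3) :
    ‖mulVecE Q x‖ = ‖x‖ := by
  have hQ' : Qᵀ * Q = 1 := mul_eq_one_comm.1 hQ
  rw [← sq_eq_sq₀ (norm_nonneg _) (norm_nonneg _), norm_sq_eq_dotProduct, norm_sq_eq_dotProduct]
  change Q *ᵥ toF x ⬝ᵥ Q *ᵥ toF x = _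
  rw [dotProduct_mulVec, ← mulVec_transpose, mulVec_mulVec, hQ', one_mulVec]

lemma mulVecE_smul (M : Matrix (Fin 3) (Fin 3) ℝ) (c : ℝ) (x : V3) :
    mulVecE M (c • x) = c • mulVecE M x :=
  congrArg toE (mulVec_smul M c (toF x))

lemma mul_colMat (M : Matrix (Fin 3) (Fin 3) ℝ) (u v w : V3) :
    M * colMat u v w = colMat (mulVecE M u) (mulVecE M v) (mulVecE M w) := by
  ext i j
  fin_cases j <;> simp [colMat, toF, mulVecE, toE, mul_apply, mulVec, dotProduct]

lemma transpose_colMat_mul_colMat (u v w u' v' w' : V3) (j k : Fin 3) :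
    ((colMat u v w)ᵀ * colMat u' v' w') j k = ⟪![u, v, w] j, ![u', v', w'] k⟫ := by
  simp [inner_eq_dotProduct, colMat, mul_apply, dotProduct]

lemma transpose_colMat_mul_self_of_orthonormal {u v w : V3} (h : Orthonormal ℝ ![u, v, w]) :
    (colMat u v w)ᵀ * colMat u v w = 1 := by
  ext j k
  rw [transpose_colMat_mul_colMat, orthonormal_iff_ite.1 h, one_apply]

lemma orthonormal_normalize {ι E : Type*} [NormedAddCommGroup E] [InnerProductSpace ℝ E]
    {v : ι → E} (hv : ∀ i, v i ≠ 0) (horth : Pairwise fun i j => ⟪v i, v j⟫ = 0) :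
    Orthonormal ℝ fun i => ‖v i‖⁻¹ • v i := by
  refine ⟨fun i => norm_smul_inv_norm (hv i), fun i j hij => ?_⟩
  change ⟪_, _⟫ = (0 : ℝ)
  rw [real_inner_smul_left, real_inner_smul_right, horth hij, mul_zero, mul_zero]

lemma pairwise_inner_cross_frame_eq_zero (u v : V3) :
    Pairwise fun i j =>
      ⟪![u, cross u v, cross u (cross u v)] i, ![u, cross u v, cross u (cross u v)] j⟫ = 0 := by
  intro i j hij
  fin_cases i <;> fin_cases j <;>
    simp only [Fin.zero_eta, Fin.mk_one, Fin.reduceFinMk, cons_val] at hij ⊢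
  all_goals first
    | exact absurd rfl hij
    | rw [inner_self_cross]
    | rw [inner_cross_self]
    | rw [real_inner_comm, inner_self_cross]
    | rw [real_inner_comm, inner_cross_self]

lemma Rimat_mul_transpose {αi βi : V3} (hind : LinearIndependent ℝ ![αi, βi]) :
    Rimat αi βi * (Rimat αi βi)ᵀ = 1 := by
  have hα : αi ≠ 0 := hind.ne_zero 0
  have hc : cross αi βi ≠ 0 := cross_ne_zero_of_linearIndependent hind
  have hcc : cross αi (cross αi βi) ≠ 0 :=
    cross_ne_zero_of_inner_eq_zero hα hc (inner_self_cross _ _)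
  have horth := orthonormal_normalize (v := ![αi, cross αi βi, cross αi (cross αi βi)])
    (fun i => by fin_cases i <;> assumption) (pairwise_inner_cross_frame_eq_zero αi βi)
  have hcols : (fun i => ‖![αi, cross αi βi, cross αi (cross αi βi)] i‖⁻¹ •
      ![αi, cross αi βi, cross αi (cross αi βi)] i) =
      ![(1 / ‖αi‖) • αi, (1 / ‖cross αi βi‖) • cross αi βi,
        (1 / ‖cross αi (cross αi βi)‖) • cross αi (cross αi βi)] := by
    funext i
    fin_cases i <;> simp [one_div]
  rw [hcols] at horth
  exact mul_eq_one_comm.1 (transpose_colMat_mul_self_of_orthonormal horth)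

/-- The paper's `R̃ᵀ`, as a function of the measured pair `(α̂, β̂) = (a, b)`. -/
def reconstruct (αi βi a b : V3) : Matrix (Fin 3) (Fin 3) ℝ :=
  colMat ((1 / ‖αi‖) • a) ((1 / ‖cross αi βi‖) • cross a b)
      ((1 / ‖cross αi (cross αi βi)‖) • cross a (cross a b)) * (Rimat αi βi)ᵀ

lemma continuous_reconstruct (αi βi : V3) :
    Continuous fun p : V3 × V3 => reconstruct αi βi p.1 p.2 := by
  unfold reconstruct
  fun_prop

lemma reconstruct_mulVecE {αi βi : V3} (hind : LinearIndependent ℝ ![αi, βi])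
    {Q : Matrix (Fin 3) (Fin 3) ℝ} (hQ : Q * Qᵀ = 1) (hdet : Q.det = 1) :
    reconstruct αi βi (mulVecE Q αi) (mulVecE Q βi) = Q := by
  rw [reconstruct, ← mulVecE_cross hQ hdet, ← mulVecE_cross hQ hdet, ← mulVecE_smul,
    ← mulVecE_smul, ← mulVecE_smul, ← mul_colMat, ← Rimat, Matrix.mul_assoc,
    Rimat_mul_transpose hind, Matrix.mul_one]

/-- If `α̂(t) − R(t)ᵀ αi → 0` and `β̂(t) − R(t)ᵀ βi → 0`, then the reconstructed
matrix `R̃(t)ᵀ` converges to `R(t)ᵀ`, i.e. `R̃(t)ᵀ − R(t)ᵀ → 0`. -/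
theorem attitude_reconstruction_convergence
    (αi βi : V3) (hind : LinearIndependent ℝ ![αi, βi])
    (R : ℝ → Matrix (Fin 3) (Fin 3) ℝ)
    (hR : ∀ t, (R t)ᵀ * R t = 1 ∧ (R t).det = 1)
    (ahat bhat : ℝ → V3)
    (ha : Tendsto (fun t => ahat t - mulVecE (R t)ᵀ αi) atTop (nhds 0))
    (hb : Tendsto (fun t => bhat t - mulVecE (R t)ᵀ βi) atTop (nhds 0)) :
    Tendsto (fun t =>
        colMat ((1 / ‖αi‖) • ahat t)
            ((1 / ‖cross αi βi‖) • cross (ahat t) (bhat t))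
            ((1 / ‖cross αi (cross αi βi)‖) • cross (ahat t) (cross (ahat t) (bhat t)))
          * (Rimat αi βi)ᵀ - (R t)ᵀ)
      atTop (nhds 0) := by
  have hQ (t : ℝ) : (R t)ᵀ * (R t)ᵀᵀ = 1 := by rw [transpose_transpose]; exact (hR t).1
  have hdet (t : ℝ) : ((R t)ᵀ).det = 1 := by rw [det_transpose]; exact (hR t).2
  have hexact (t : ℝ) : reconstruct αi βi (mulVecE (R t)ᵀ αi) (mulVecE (R t)ᵀ βi) = (R t)ᵀ :=
    reconstruct_mulVecE hind (hQ t) (hdet t)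
  have hsphere (t : ℝ) : (mulVecE (R t)ᵀ αi, mulVecE (R t)ᵀ βi) ∈
      Metric.sphere 0 ‖αi‖ ×ˢ Metric.sphere 0 ‖βi‖ := by
    simp [norm_mulVecE (hQ t)]
  have hclose : Tendsto (fun t => (ahat t, bhat t) - (mulVecE (R t)ᵀ αi, mulVecE (R t)ᵀ βi))
      atTop (nhds 0) :=
    ha.prodMk_nhds hb
  have hdiff := (continuous_reconstruct αi βi).tendsto_sub_comp_of_isCompact
    ((isCompact_sphere 0 ‖αi‖).prod (isCompact_sphere 0 ‖βi‖)) (Eventually.of_forall hsphere)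
    hclose
  simp only [hexact] at hdiff
  exact hdiff
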